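/- arXiv:2305.04113 — 3 statements merged into one kernel-verified Lean document; each statement's English description precedes it below -/
import Mathlib

section
/- Let A₁,…,A_S be real matrices with Aₛ of size q×qₛ. If the intersection ⋂ₛ colspace(Aₛ) of their column spaces is nontrivial (contains a nonzero vector), then there exists a nonzero positive semidefinite q×q matrix C such that AₛAₛᵀ − C is positive semidefinite for every s = 1,…,S. -/
/-!
If `v = Aₛ wₛ`, Cauchy–Schwarz gives `(vᵀx)² = (wₛᵀ Aₛᵀ x)² ≤ |wₛ|² · xᵀ Aₛ Aₛᵀ x`, i.e.
`Aₛ Aₛᵀ - t⁻¹ v vᵀ = t⁻¹ Aₛ (t I - wₛ wₛᵀ) Aₛᵀ` is positive semidefinite whenever `|wₛ|² ≤ t`.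
So `C = t⁻¹ v vᵀ` works for any `t > 0` bounding all the `|wₛ|²`.
-/

open Matrix

/-- Column space (range) of a real matrix. -/
def colspace {m n : ℕ} (A : Matrix (Fin m) (Fin n) ℝ) : Submodule ℝ (Fin m → ℝ) :=
  LinearMap.range A.mulVecLin

lemma mem_colspace_iff {m n : ℕ} {A : Matrix (Fin m) (Fin n) ℝ} {v : Fin m → ℝ} :
    v ∈ colspace A ↔ ∃ w, A *ᵥ w = v :=
  Iff.rfl

namespace Matrix

variable {m n : Type*} [Fintype m] [Fintype n]

theorem sq_dotProduct_le (w x : n → ℝ) : (w ⬝ᵥ x) ^ 2 ≤ (w ⬝ᵥ w) * (x ⬝ᵥ x) := by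
  simpa only [dotProduct, sq] using Finset.sum_mul_sq_le_sq_mul_sq Finset.univ w x

theorem posSemidef_smul_one_sub_vecMulVec [DecidableEq n] {w : n → ℝ} {t : ℝ}
    (ht : w ⬝ᵥ w ≤ t) : (t • (1 : Matrix n n ℝ) - vecMulVec w w).PosSemidef := by
  refine PosSemidef.of_dotProduct_mulVec_nonneg ?_ fun x => ?_
  · exact (isHermitian_one.smul (.all t)).sub (posSemidef_vecMulVec_self_star w).isHermitian
  · have hx : x ⬝ᵥ ((t • 1 - vecMulVec w w) *ᵥ x) = t * (x ⬝ᵥ x) - (w ⬝ᵥ x) ^ 2 := by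
      rw [sub_mulVec, smul_mulVec, one_mulVec, vecMulVec_mulVec, dotProduct_sub,
        dotProduct_smul, dotProduct_smul, smul_eq_mul, op_smul_eq_mul, dotProduct_comm x w, sq]
    rw [star_trivial, hx, sub_nonneg]
    calc (w ⬝ᵥ x) ^ 2 ≤ (w ⬝ᵥ w) * (x ⬝ᵥ x) := sq_dotProduct_le w x
      _ ≤ t * (x ⬝ᵥ x) := mul_le_mul_of_nonneg_right ht (dotProduct_self_star_nonneg x)

theorem posSemidef_mul_transpose_sub_inv_smul_vecMulVec (A : Matrix m n ℝ) {w : n → ℝ}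
    {t : ℝ} (ht₀ : 0 < t) (ht : w ⬝ᵥ w ≤ t) :
    (A * Aᵀ - t⁻¹ • vecMulVec (A *ᵥ w) (A *ᵥ w)).PosSemidef := by
  classical
  have hconj :
      A * (t • 1 - vecMulVec w w) * Aᵀ = t • (A * Aᵀ) - vecMulVec (A *ᵥ w) (A *ᵥ w) := by
    rw [Matrix.mul_sub, Matrix.sub_mul, Matrix.mul_smul, Matrix.mul_one, Matrix.smul_mul,
      mul_vecMulVec, vecMulVec_mul, vecMul_transpose]
  have hpsd := ((posSemidef_smul_one_sub_vecMulVec ht).mul_mul_conjTranspose_same A).smul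
    (inv_nonneg.mpr ht₀.le)
  rwa [conjTranspose_eq_transpose_of_trivial, hconj, smul_sub, inv_smul_smul₀ ht₀.ne'] at hpsd

end Matrix

/-- a common nonzero direction in all column spaces yields a nonzero
PSD matrix C with AₛAₛᵀ − C PSD for all s. -/
theorem stmt2 {q S : ℕ} (qs : Fin S → ℕ)
    (A : ∀ s : Fin S, Matrix (Fin q) (Fin (qs s)) ℝ)
    (h : ∃ v : Fin q → ℝ, v ≠ 0 ∧ ∀ s, v ∈ colspace (A s)) :
    ∃ C : Matrix (Fin q) (Fin q) ℝ, C ≠ 0 ∧ C.PosSemidef ∧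
      ∀ s, (A s * (A s)ᵀ - C).PosSemidef := by
  obtain ⟨v, hv, hmem⟩ := h
  choose w hw using fun s => mem_colspace_iff.mp (hmem s)
  set t : ℝ := 1 + ∑ s, w s ⬝ᵥ w s
  have hw_nonneg : ∀ s, 0 ≤ w s ⬝ᵥ w s := fun s => dotProduct_self_star_nonneg (w s)
  have ht₀ : 0 < t := add_pos_of_pos_of_nonneg one_pos (Finset.sum_nonneg fun s _ => hw_nonneg s)
  have hw_le : ∀ s, w s ⬝ᵥ w s ≤ t := fun s =>
    (Finset.single_le_sum (fun s _ => hw_nonneg s) (Finset.mem_univ s)).trans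
      (le_add_of_nonneg_left zero_le_one)
  refine ⟨t⁻¹ • vecMulVec v v, smul_ne_zero (inv_ne_zero ht₀.ne') (vecMulVec_ne_zero hv hv),
    (posSemidef_vecMulVec_self_star v).smul (inv_nonneg.mpr ht₀.le), fun s => ?_⟩
  rw [← hw s]
  exact posSemidef_mul_transpose_sub_inv_smul_vecMulVec (A s) ht₀ (hw_le s)
end

section
/- Let A₁,…,A_S be real matrices, Aₛ of size q×qₛ, each of full column rank (rank(Aₛ) = qₛ), and suppose C is a nonzero q×q positive semidefinite matrix such that for each s there exists a q×qₛ matrix Ãₛ with AₛAₛᵀ + C = ÃₛÃₛᵀ. Then colspace(C) ⊆ ⋂ₛ colspace(Aₛ), and in particular ⋂ₛ colspace(Aₛ) is nontrivial. -/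
open Matrix

lemma finrank_colspace {m n : ℕ} (A : Matrix (Fin m) (Fin n) ℝ) :
    Module.finrank ℝ (colspace A) = A.rank := rfl

lemma colspace_mul_transpose_self {m n : ℕ} (A : Matrix (Fin m) (Fin n) ℝ) :
    colspace (A * Aᵀ) = colspace A := by
  apply Submodule.eq_of_le_of_finrank_le
  · rw [colspace, colspace, Matrix.mulVecLin_mul]
    exact LinearMap.range_comp_le_range _ _
  · rw [finrank_colspace, finrank_colspace, A.rank_self_mul_transpose]

lemma range_le_of_ker_le {q : ℕ} {M Q : Matrix (Fin q) (Fin q) ℝ}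
    (hM : Mᵀ = M) (hQ : Qᵀ = Q)
    (hker : ∀ w, M *ᵥ w = 0 → Q *ᵥ w = 0) :
    colspace Q ≤ colspace M := by
  -- key dot product fact
  have hdot : ∀ w z : Fin q → ℝ, M *ᵥ w = 0 → w ⬝ᵥ (M *ᵥ z) = 0 := by
    intro w z hw
    rw [dotProduct_mulVec, ← hM, vecMul_transpose, hw, zero_dotProduct]
  -- range M ⊔ ker M = ⊤
  have hdisj : LinearMap.range M.mulVecLin ⊓ LinearMap.ker M.mulVecLin = ⊥ := by
    rw [Submodule.eq_bot_iff]
    rintro w ⟨⟨z, rfl⟩, hw⟩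
    simp only [LinearMap.mem_ker, Matrix.mulVecLin_apply] at hw ⊢
    have h0 : (M *ᵥ z) ⬝ᵥ (M *ᵥ z) = 0 := by
      rw [dotProduct_comm]; exact hdot _ _ hw
    exact dotProduct_self_eq_zero.mp h0
  have htop : LinearMap.range M.mulVecLin ⊔ LinearMap.ker M.mulVecLin = ⊤ := by
    apply Submodule.eq_top_of_finrank_eq
    have h1 := Submodule.finrank_sup_add_finrank_inf_eq
      (LinearMap.range M.mulVecLin) (LinearMap.ker M.mulVecLin)
    have h2 := LinearMap.finrank_range_add_finrank_ker M.mulVecLin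
    rw [hdisj, finrank_bot, add_zero] at h1
    rw [h1, h2]
  rintro x ⟨y, rfl⟩
  simp only [Matrix.mulVecLin_apply] at *
  have hx : Q *ᵥ y ∈ LinearMap.range M.mulVecLin ⊔ LinearMap.ker M.mulVecLin := by
    rw [htop]; trivial
  obtain ⟨u, hu, w, hw, hx⟩ := Submodule.mem_sup.mp hx
  obtain ⟨z, rfl⟩ := hu
  simp only [LinearMap.mem_ker, Matrix.mulVecLin_apply] at hw
  have hwQ : Q *ᵥ w = 0 := hker w hw
  have hw0 : w = 0 := by
    have h1 : w ⬝ᵥ (Q *ᵥ y) = 0 := by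
      rw [dotProduct_mulVec, ← hQ, vecMul_transpose, hwQ, zero_dotProduct]
    have h2 : w ⬝ᵥ (M.mulVecLin z) = 0 := hdot w z hw
    rw [← hx, dotProduct_add, h2, zero_add] at h1
    exact dotProduct_self_eq_zero.mp h1
  rw [← hx, hw0, add_zero]
  exact ⟨z, rfl⟩

/-- necessity direction — if a nonzero PSD matrix C can be absorbed,
the column spaces of the (full column rank) Aₛ intersect nontrivially. -/
theorem stmt3 {q S : ℕ} (qs : Fin S → ℕ)
    (A : ∀ s : Fin S, Matrix (Fin q) (Fin (qs s)) ℝ)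
    (hrank : ∀ s, (A s).rank = qs s)
    (C : Matrix (Fin q) (Fin q) ℝ) (hC0 : C ≠ 0) (hC : C.PosSemidef)
    (hswitch : ∀ s, ∃ At : Matrix (Fin q) (Fin (qs s)) ℝ,
      A s * (A s)ᵀ + C = At * Atᵀ) :
    (∀ s, colspace C ≤ colspace (A s)) ∧
    ∃ v : Fin q → ℝ, v ≠ 0 ∧ ∀ s, v ∈ colspace (A s) := by
  have hCsym : Cᵀ = C := by
    have := hC.1
    rwa [Matrix.IsHermitian, conjTranspose_eq_transpose_of_trivial] at this
  have hmain : ∀ s, colspace C ≤ colspace (A s) := by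
    intro s
    obtain ⟨At, hAt⟩ := hswitch s
    set M := A s * (A s)ᵀ + C with hMdef
    have hAA : (A s * (A s)ᵀ).PosSemidef := by
      have := posSemidef_self_mul_conjTranspose (A s)
      rwa [conjTranspose_eq_transpose_of_trivial] at this
    have hMsym : Mᵀ = M := by
      rw [hMdef, transpose_add, transpose_mul, transpose_transpose, hCsym]
    have hAAsym : (A s * (A s)ᵀ)ᵀ = A s * (A s)ᵀ := by
      rw [transpose_mul, transpose_transpose]
    -- kernel of M is contained in kernels of both summands
    have hker : ∀ w, M *ᵥ w = 0 →
        (A s * (A s)ᵀ) *ᵥ w = 0 ∧ C *ᵥ w = 0 := by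
      intro w hw
      have h0 : w ⬝ᵥ (M *ᵥ w) = 0 := by rw [hw, dotProduct_zero]
      rw [hMdef, Matrix.add_mulVec, dotProduct_add] at h0
      have h1 : (0:ℝ) ≤ w ⬝ᵥ ((A s * (A s)ᵀ) *ᵥ w) := by
        have := hAA.dotProduct_mulVec_nonneg w; simpa using this
      have h2 : (0:ℝ) ≤ w ⬝ᵥ (C *ᵥ w) := by
        have := hC.dotProduct_mulVec_nonneg w; simpa using this
      constructor
      · have : w ⬝ᵥ ((A s * (A s)ᵀ) *ᵥ w) = 0 := by linarith
        have := (hAA.dotProduct_mulVec_zero_iff w).mp (by simpa using this)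
        exact this
      · have : w ⬝ᵥ (C *ᵥ w) = 0 := by linarith
        have := (hC.dotProduct_mulVec_zero_iff w).mp (by simpa using this)
        exact this
    have hCM : colspace C ≤ colspace M :=
      range_le_of_ker_le hMsym hCsym (fun w hw => (hker w hw).2)
    have hAM : colspace (A s) ≤ colspace M := by
      rw [← colspace_mul_transpose_self (A s)]
      exact range_le_of_ker_le hMsym hAAsym (fun w hw => (hker w hw).1)
    -- colspace M has finrank ≤ qs s
    have hMAt : colspace M = colspace At := by
      rw [hAt, colspace_mul_transpose_self]
    have hfin : Module.finrank ℝ (colspace M) ≤ Module.finrank ℝ (colspace (A s)) := by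
      rw [hMAt, finrank_colspace, finrank_colspace, hrank s]
      exact (At.rank_le_card_width).trans (Fintype.card_fin _).le
    have : colspace (A s) = colspace M := Submodule.eq_of_le_of_finrank_le hAM hfin
    rw [this]
    exact hCM
  refine ⟨hmain, ?_⟩
  -- find a nonzero column of C
  have : ∃ i j, C i j ≠ 0 := by
    by_contra h
    push_neg at h
    exact hC0 (by ext i j; exact h i j)
  obtain ⟨i, j, hij⟩ := this
  refine ⟨C *ᵥ Pi.single j 1, ?_, fun s => hmain s ⟨Pi.single j 1, rfl⟩⟩
  intro h
  apply hij
  have := congrFun h i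
  simpa using this
end

section
/- Let Σ₀ and Σ be d×d symmetric positive definite matrices. Then 2·KL(N(0,Σ₀) ‖ N(0,Σ)) = trace(Σ⁻¹Σ₀ − I) − log det(Σ⁻¹Σ₀) ≤ ‖Σ − Σ₀‖_F² / (λ_min(Σ₀)·λ_min(Σ)), where λ_min denotes the smallest eigenvalue and ‖·‖_F the Frobenius norm. -/
/-!
Put `D = Σ - Σ₀`. Expanding gives `Σ₀⁻¹ D Σ⁻¹ D = Σ⁻¹Σ₀ + Σ₀⁻¹Σ - 2`, and
`-log det (Σ⁻¹Σ₀) = log det (Σ₀⁻¹Σ) ≤ tr (Σ₀⁻¹Σ) - d` by `log x ≤ x - 1` applied to the eigenvalues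
of the positive definite matrix `Σ₀^{-1/2} Σ Σ₀^{-1/2}`, which is similar to `Σ₀⁻¹Σ`. Hence the left
side is at most `tr (Σ₀⁻¹ D Σ⁻¹ D)`, and the Loewner bounds `Σ₀⁻¹ ≤ λ_min(Σ₀)⁻¹` and
`Σ⁻¹ ≤ λ_min(Σ)⁻¹` bound this trace by `tr (D²) / (λ_min(Σ₀) λ_min(Σ))`, where
`tr (D²) = ‖D‖_F²` since `D` is symmetric.
-/

open Matrix BigOperators

/-- Euclidean norm of a real vector. -/
noncomputable def vecEnorm {n : ℕ} (v : Fin n → ℝ) : ℝ := Real.sqrt (∑ i, (v i) ^ 2)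

/-- Frobenius norm of a real matrix. -/
noncomputable def frobNorm {m n : ℕ} (A : Matrix (Fin m) (Fin n) ℝ) : ℝ :=
  Real.sqrt (∑ i, ∑ j, (A i j) ^ 2)

/-- Spectral norm (largest singular value) of a real matrix. -/
noncomputable def specNorm {m n : ℕ} (A : Matrix (Fin m) (Fin n) ℝ) : ℝ :=
  sSup {r | ∃ x : Fin n → ℝ, vecEnorm x = 1 ∧ r = vecEnorm (A.mulVec x)}

/-- Smallest singular value of a real matrix. -/
noncomputable def sMin {m n : ℕ} (A : Matrix (Fin m) (Fin n) ℝ) : ℝ :=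
  sInf {r | ∃ x : Fin n → ℝ, vecEnorm x = 1 ∧ r = vecEnorm (A.mulVec x)}

open scoped MatrixOrder

namespace Matrix

variable {n : Type*} [Fintype n] [DecidableEq n]

theorem PosDef.log_det_le_trace_sub_card {P : Matrix n n ℝ} (hP : P.PosDef) :
    Real.log P.det ≤ P.trace - Fintype.card n := by
  simp only [hP.1.det_eq_prod_eigenvalues, hP.1.trace_eq_sum_eigenvalues,
    RCLike.ofReal_real_eq_id, id, Real.log_prod fun i _ => (hP.eigenvalues_pos i).ne']
  rw [← Finset.card_univ, Finset.cast_card, ← Finset.sum_sub_distrib]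
  exact Finset.sum_le_sum fun i _ => Real.log_le_sub_one_of_pos (hP.eigenvalues_pos i)

theorem PosDef.log_det_mul_le_trace_mul_sub_card {A B : Matrix n n ℝ} (hA : A.PosDef)
    (hB : B.PosDef) : Real.log (A * B).det ≤ (A * B).trace - Fintype.card n := by
  set C := CFC.sqrt A
  have hCC : C * C = A := CFC.sqrt_mul_sqrt_self A hA.posSemidef.nonneg
  have hC : IsUnit C := isUnit_of_mul_isUnit_left (hCC ▸ hA.isUnit)
  have hCBC : (C * B * C).PosDef := by
    have := (hC.posDef_star_left_conjugate_iff (x := B)).mpr hB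
    rwa [(CFC.sqrt_nonneg A).isSelfAdjoint.star_eq] at this
  have htr : (C * B * C).trace = (A * B).trace := by
    rw [trace_mul_cycle, ← hCC]
  have hdet : (C * B * C).det = (A * B).det := by
    rw [← hCC, det_mul, det_mul, det_mul, det_mul]; ring
  rw [← htr, ← hdet]
  exact hCBC.log_det_le_trace_sub_card

theorem trace_inv_mul_sub_mul_inv_mul_sub {R : Type*} [CommRing R] {A B : Matrix n n R}
    (hA : IsUnit A) (hB : IsUnit B) :
    (A⁻¹ * (B - A) * (B⁻¹ * (B - A))).trace
      = (A⁻¹ * B).trace + (B⁻¹ * A).trace - 2 * Fintype.card n := by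
  have hA_inv : A⁻¹ * A = 1 := nonsing_inv_mul A ((isUnit_iff_isUnit_det A).mp hA)
  have hB_inv : B⁻¹ * B = 1 := nonsing_inv_mul B ((isUnit_iff_isUnit_det B).mp hB)
  have hB_inv' : B * B⁻¹ = 1 := mul_nonsing_inv B ((isUnit_iff_isUnit_det B).mp hB)
  have hexpand : A⁻¹ * (B - A) * (B⁻¹ * (B - A)) = A⁻¹ * B + B⁻¹ * A - 1 - 1 := by
    simp only [mul_sub, sub_mul, mul_assoc, ← mul_assoc B B⁻¹, hA_inv, hB_inv, hB_inv', one_mul,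
      mul_one]
    abel
  rw [hexpand, trace_sub, trace_sub, trace_add, trace_one]
  ring

theorem PosDef.iInf_eigenvalues_pos [Nonempty n] {A : Matrix n n ℝ} (hA : A.PosDef) :
    0 < ⨅ i, hA.1.eigenvalues i := by
  obtain ⟨i, hi⟩ := exists_eq_ciInf_of_finite (f := hA.1.eigenvalues)
  exact hi ▸ hA.eigenvalues_pos i

theorem PosDef.inv_le_iInf_eigenvalues_inv_smul_one [Nonempty n] {A : Matrix n n ℝ}
    (hA : A.PosDef) : A⁻¹ ≤ (⨅ i, hA.1.eigenvalues i)⁻¹ • (1 : Matrix n n ℝ) := by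
  have hspec := hA.1.spectrum_real_eq_range_eigenvalues
  have hinv_cont : ContinuousOn (fun x : ℝ => x⁻¹) (spectrum ℝ A) := by
    rw [hspec]
    rintro _ ⟨i, rfl⟩
    exact (continuousAt_inv₀ (hA.eigenvalues_pos i).ne').continuousWithinAt
  rw [← Algebra.algebraMap_eq_smul_one, nonsing_inv_eq_ringInverse,
    ← cfc_ringInverse_id (R := ℝ) A hA.isUnit hA.1.isSelfAdjoint,
    cfc_le_algebraMap_iff _ _ _ hinv_cont hA.1.isSelfAdjoint, hspec]
  rintro _ ⟨i, rfl⟩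
  exact inv_anti₀ hA.iInf_eigenvalues_pos (ciInf_le (Finite.bddBelow_range _) i)

theorem trace_mul_le_of_le_smul_one {P Q : Matrix n n ℝ} {c : ℝ} (hP : P ≤ c • 1)
    (hQ : Q.PosSemidef) : (P * Q).trace ≤ c * Q.trace := by
  obtain ⟨R, rfl⟩ := CStarAlgebra.nonneg_iff_eq_star_mul_self.mp hQ.nonneg
  have := ((le_iff.mp hP).mul_mul_conjTranspose_same R).trace_nonneg
  rw [trace_mul_cycle, mul_sub, trace_sub, mul_smul_comm, mul_one, trace_smul, smul_eq_mul,
    ← trace_mul_cycle] at this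
  rw [star_eq_conjTranspose, ← mul_assoc, trace_mul_cycle]
  linarith

theorem PosDef.trace_inv_mul_mul_inv_mul_le [Nonempty n] {A B D : Matrix n n ℝ} (hA : A.PosDef)
    (hB : B.PosDef) (hD : D.IsHermitian) :
    (A⁻¹ * D * (B⁻¹ * D)).trace
      ≤ (⨅ i, hA.1.eigenvalues i)⁻¹ * ((⨅ i, hB.1.eigenvalues i)⁻¹ * (D * D).trace) := by
  have hDBD : (D * B⁻¹ * D).PosSemidef := by
    simpa only [hD.eq] using hB.inv.posSemidef.conjTranspose_mul_mul_same D
  have hDD : (D * D).PosSemidef := by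
    simpa only [hD.eq] using posSemidef_conjTranspose_mul_self D
  calc (A⁻¹ * D * (B⁻¹ * D)).trace = (A⁻¹ * (D * B⁻¹ * D)).trace := by
        simp only [mul_assoc]
    _ ≤ (⨅ i, hA.1.eigenvalues i)⁻¹ * (D * B⁻¹ * D).trace :=
        trace_mul_le_of_le_smul_one hA.inv_le_iInf_eigenvalues_inv_smul_one hDBD
    _ = (⨅ i, hA.1.eigenvalues i)⁻¹ * (B⁻¹ * (D * D)).trace := by
        rw [trace_mul_comm, ← mul_assoc, trace_mul_comm]
    _ ≤ _ := by
        gcongr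
        · exact (inv_pos.mpr hA.iInf_eigenvalues_pos).le
        · exact trace_mul_le_of_le_smul_one hB.inv_le_iInf_eigenvalues_inv_smul_one hDD

end Matrix

theorem frobNorm_sq {m n : ℕ} (A : Matrix (Fin m) (Fin n) ℝ) :
    frobNorm A ^ 2 = (A * Aᵀ).trace := by
  rw [frobNorm, Real.sq_sqrt (by positivity)]
  simp [trace, mul_apply, sq]

/-- 2·KL(N(0,Σ₀)‖N(0,Σ)) = trace(Σ⁻¹Σ₀ − I) − log det(Σ⁻¹Σ₀)
is bounded by ‖Σ − Σ₀‖_F²/(λ_min(Σ₀)λ_min(Σ)). -/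
theorem stmt9 {d : ℕ} (hd : 0 < d) (S0 Sm : Matrix (Fin d) (Fin d) ℝ)
    (h0 : S0.PosDef) (h1 : Sm.PosDef) :
    (Sm⁻¹ * S0 - 1).trace - Real.log (Sm⁻¹ * S0).det ≤
      frobNorm (Sm - S0) ^ 2 / ((⨅ i, h0.1.eigenvalues i) * (⨅ i, h1.1.eigenvalues i)) := by
  have : Nonempty (Fin d) := ⟨⟨0, hd⟩⟩
  have hdet : (Sm⁻¹ * S0).det = ((S0⁻¹ * Sm).det)⁻¹ := by
    simp only [det_mul, det_nonsing_inv, Ring.inverse_eq_inv', mul_inv, inv_inv, mul_comm]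
  have hlogdet := h0.inv.log_det_mul_le_trace_mul_sub_card h1
  have hsplit := trace_inv_mul_sub_mul_inv_mul_sub h0.isUnit h1.isUnit
  have hD : (Sm - S0).IsHermitian := h1.1.sub h0.1
  have hbound := h0.trace_inv_mul_mul_inv_mul_le h1 hD
  rw [frobNorm_sq, ← conjTranspose_eq_transpose_of_trivial, hD.eq, div_eq_mul_inv, mul_inv, hdet,
    Real.log_inv, trace_sub, trace_one]
  linarith
end
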